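/- For every u in the Schwartz class (or C^1 with compact support) on ℝ², the inequality ‖u‖_{L⁴(ℝ²)} ≤ C · ‖u‖_{L²(ℝ²)}^{1/2} · ‖∇u‖_{L²(ℝ²)}^{1/2} holds with an absolute constant C (Ladyzhenskaya's multiplicative Sobolev inequality in dimension two). -/

import Mathlib

open MeasureTheory Module ENNReal NNReal

/-- Ladyzhenskaya's multiplicative Sobolev inequality in dimension two:
`‖u‖_{L⁴} ≤ C ‖u‖_{L²}^{1/2} ‖∇u‖_{L²}^{1/2}` for `u ∈ C¹_c(ℝ²)`. -/
theorem stmt_0 :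
    ∃ C : ℝ, 0 < C ∧ ∀ u : (ℝ × ℝ) → ℝ, ContDiff ℝ 1 u → HasCompactSupport u →
      (∫ x, |u x| ^ (4 : ℝ)) ^ ((1 : ℝ) / 4) ≤
        C * ((∫ x, |u x| ^ (2 : ℝ)) ^ ((1 : ℝ) / 2)) ^ ((1 : ℝ) / 2) *
          ((∫ x, ‖fderiv ℝ u x‖ ^ (2 : ℝ)) ^ ((1 : ℝ) / 2)) ^ ((1 : ℝ) / 2) := by
  set C : ℝ≥0 := lintegralPowLePowLIntegralFDerivConst (volume : Measure (ℝ × ℝ)) 2 with hC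
  set Kr : ℝ := (C : ℝ) * 4 with hKr
  have hKr0 : 0 ≤ Kr := by positivity
  refine ⟨Kr ^ ((1:ℝ)/4) + 1, by positivity, fun u hu h2u => ?_⟩
  have hrank : finrank ℝ (ℝ × ℝ) = 2 := by simp
  have hconj : Real.HolderConjugate (finrank ℝ (ℝ × ℝ)) 2 := by
    rw [hrank]; constructor <;> norm_num
  have hconj2 : Real.HolderConjugate 2 2 := by constructor <;> norm_num
  set v : (ℝ × ℝ) → ℝ := fun x => u x * u x with hv
  have hvC : ContDiff ℝ 1 v := hu.mul hu
  have hvS : HasCompactSupport v := h2u.mul_left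
  have hu' : Continuous u := hu.continuous
  have hdu : Continuous (fderiv ℝ u) := hu.continuous_fderiv one_ne_zero
  have hdus : HasCompactSupport (fderiv ℝ u) := h2u.fderiv ℝ
  -- pointwise derivative of v
  have hdv : ∀ x, (‖fderiv ℝ v x‖₊ : ℝ≥0∞) = 2 * ‖u x‖₊ * ‖fderiv ℝ u x‖₊ := by
    intro x
    have h1 : fderiv ℝ v x = (2 * u x) • fderiv ℝ u x := by
      rw [hv]
      rw [fderiv_fun_mul (hu.differentiable one_ne_zero x) (hu.differentiable one_ne_zero x)]
      rw [two_mul, add_smul]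
    rw [h1]
    push_cast [nnnorm_smul, nnnorm_mul]
    ring_nf
    norm_num
    ring
  -- Sobolev inequality for v
  have key := lintegral_pow_le_pow_lintegral_fderiv (volume : Measure (ℝ × ℝ)) hvC hvS hconj
  -- Cauchy-Schwarz
  have hCS := ENNReal.lintegral_mul_le_Lp_mul_Lq (volume : Measure (ℝ × ℝ)) hconj2
    (f := fun x => (‖u x‖₊ : ℝ≥0∞)) (g := fun x => (‖fderiv ℝ u x‖₊ : ℝ≥0∞))
    hu'.measurable.nnnorm.coe_nnreal_ennreal.aemeasurable
    hdu.measurable.nnnorm.coe_nnreal_ennreal.aemeasurable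
  set lB : ℝ≥0∞ := ∫⁻ x, (‖u x‖₊ : ℝ≥0∞) ^ (2:ℝ) with hlB
  set lD : ℝ≥0∞ := ∫⁻ x, (‖fderiv ℝ u x‖₊ : ℝ≥0∞) ^ (2:ℝ) with hlD
  have hgrad : (∫⁻ x, (‖fderiv ℝ v x‖₊ : ℝ≥0∞)) ≤ 2 * (lB ^ ((1:ℝ)/2) * lD ^ ((1:ℝ)/2)) := by
    calc (∫⁻ x, (‖fderiv ℝ v x‖₊ : ℝ≥0∞))
        = ∫⁻ x, 2 * ((‖u x‖₊ : ℝ≥0∞) * ‖fderiv ℝ u x‖₊) := by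
          simp_rw [← mul_assoc]; exact lintegral_congr fun x => hdv x
      _ = 2 * ∫⁻ x, (‖u x‖₊ : ℝ≥0∞) * ‖fderiv ℝ u x‖₊ := lintegral_const_mul' _ _ (by norm_num)
      _ ≤ 2 * (lB ^ ((1:ℝ)/2) * lD ^ ((1:ℝ)/2)) := by gcongr; exact hCS
  have hvpt : ∀ x, (‖v x‖₊ : ℝ≥0∞) ^ (2:ℝ) = (‖u x‖₊ : ℝ≥0∞) ^ (4:ℝ) := by
    intro x
    have : (‖v x‖₊ : ℝ≥0∞) = (‖u x‖₊ : ℝ≥0∞) * ‖u x‖₊ := by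
      rw [hv]; push_cast [nnnorm_mul]; ring
    rw [this, ENNReal.mul_rpow_of_nonneg _ _ (by norm_num),
      ← ENNReal.rpow_add_of_nonneg _ _ (by norm_num) (by norm_num)]
    norm_num
  set lA : ℝ≥0∞ := ∫⁻ x, (‖u x‖₊ : ℝ≥0∞) ^ (4:ℝ) with hlA
  have main : lA ≤ (C : ℝ≥0∞) * 4 * (lB * lD) := by
    calc lA = ∫⁻ x, (‖v x‖₊ : ℝ≥0∞) ^ (2:ℝ) := (lintegral_congr fun x => hvpt x).symm
      _ ≤ C * (∫⁻ x, (‖fderiv ℝ v x‖₊ : ℝ≥0∞)) ^ (2:ℝ) := key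
      _ ≤ C * (2 * (lB ^ ((1:ℝ)/2) * lD ^ ((1:ℝ)/2))) ^ (2:ℝ) := by
          gcongr
      _ = (C : ℝ≥0∞) * 4 * (lB * lD) := by
          rw [ENNReal.mul_rpow_of_nonneg _ _ (by norm_num : (0:ℝ) ≤ 2),
            ENNReal.mul_rpow_of_nonneg _ _ (by norm_num : (0:ℝ) ≤ 2),
            ← ENNReal.rpow_mul, ← ENNReal.rpow_mul]
          norm_num [ENNReal.rpow_two]
          ring
  -- integrability
  have hi4 : Integrable (fun x => |u x| ^ (4:ℝ)) := by
    apply Continuous.integrable_of_hasCompactSupport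
    · exact hu'.abs.rpow_const (fun x => Or.inr (by norm_num))
    · exact h2u.comp_left (g := fun t : ℝ => |t| ^ (4:ℝ)) (by simp)
  have hi2 : Integrable (fun x => |u x| ^ (2:ℝ)) := by
    apply Continuous.integrable_of_hasCompactSupport
    · exact hu'.abs.rpow_const (fun x => Or.inr (by norm_num))
    · exact h2u.comp_left (g := fun t : ℝ => |t| ^ (2:ℝ)) (by simp)
  have hiD : Integrable (fun x => ‖fderiv ℝ u x‖ ^ (2:ℝ)) := by
    apply Continuous.integrable_of_hasCompactSupport
    · exact hdu.norm.rpow_const (fun x => Or.inr (by norm_num))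
    · exact hdus.comp_left (g := fun L : (ℝ × ℝ) →L[ℝ] ℝ => ‖L‖ ^ (2:ℝ)) (by simp)
  set A : ℝ := ∫ x, |u x| ^ (4:ℝ) with hA'
  set B : ℝ := ∫ x, |u x| ^ (2:ℝ) with hB'
  set D : ℝ := ∫ x, ‖fderiv ℝ u x‖ ^ (2:ℝ) with hD'
  have hA0 : 0 ≤ A := integral_nonneg fun x => Real.rpow_nonneg (abs_nonneg _) _
  have hB0 : 0 ≤ B := integral_nonneg fun x => Real.rpow_nonneg (abs_nonneg _) _
  have hD0 : 0 ≤ D := integral_nonneg fun x => Real.rpow_nonneg (norm_nonneg _) _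
  have hA : ENNReal.ofReal A = lA := by
    rw [hA', ofReal_integral_eq_lintegral_ofReal hi4
      (Filter.Eventually.of_forall fun x => Real.rpow_nonneg (abs_nonneg _) _)]
    refine lintegral_congr fun x => ?_
    rw [← Real.norm_eq_abs, ← ENNReal.ofReal_coe_nnreal, coe_nnnorm,
      ← ENNReal.ofReal_rpow_of_nonneg (norm_nonneg _) (by norm_num)]
  have hB : ENNReal.ofReal B = lB := by
    rw [hB', ofReal_integral_eq_lintegral_ofReal hi2
      (Filter.Eventually.of_forall fun x => Real.rpow_nonneg (abs_nonneg _) _)]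
    refine lintegral_congr fun x => ?_
    rw [← Real.norm_eq_abs, ← ENNReal.ofReal_coe_nnreal, coe_nnnorm,
      ← ENNReal.ofReal_rpow_of_nonneg (norm_nonneg _) (by norm_num)]
  have hD : ENNReal.ofReal D = lD := by
    rw [hD', ofReal_integral_eq_lintegral_ofReal hiD
      (Filter.Eventually.of_forall fun x => Real.rpow_nonneg (norm_nonneg _) _)]
    refine lintegral_congr fun x => ?_
    rw [← ENNReal.ofReal_coe_nnreal, coe_nnnorm,
      ← ENNReal.ofReal_rpow_of_nonneg (norm_nonneg _) (by norm_num)]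
  have hreal : A ≤ Kr * (B * D) := by
    rw [← ENNReal.ofReal_le_ofReal_iff (by positivity)]
    calc ENNReal.ofReal A = lA := hA
      _ ≤ (C : ℝ≥0∞) * 4 * (lB * lD) := main
      _ = ENNReal.ofReal (Kr * (B * D)) := by
          rw [ENNReal.ofReal_mul hKr0, ENNReal.ofReal_mul hB0, hB, hD, hKr,
            ENNReal.ofReal_mul (by positivity), ENNReal.ofReal_coe_nnreal]
          norm_num
  rw [← Real.rpow_mul hB0, ← Real.rpow_mul hD0]
  norm_num
  calc A ^ ((1:ℝ)/4) ≤ (Kr * (B * D)) ^ ((1:ℝ)/4) :=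
        Real.rpow_le_rpow hA0 hreal (by norm_num)
    _ = Kr ^ ((1:ℝ)/4) * (B ^ ((1:ℝ)/4) * D ^ ((1:ℝ)/4)) := by
        rw [Real.mul_rpow hKr0 (by positivity), Real.mul_rpow hB0 hD0]
    _ ≤ (Kr ^ ((1:ℝ)/4) + 1) * (B ^ ((1:ℝ)/4) * D ^ ((1:ℝ)/4)) := by
        apply mul_le_mul_of_nonneg_right (by linarith) (by positivity)
    _ = (Kr ^ ((1:ℝ)/4) + 1) * B ^ ((1:ℝ)/4) * D ^ ((1:ℝ)/4) := by ring
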